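/- arXiv:2002.08318 — 4 statements merged into one kernel-verified Lean document; each statement's English description precedes it below -/
import Mathlib

section
/- In the extended-operator setup, if F : ℝ^n → ℝ^n is monotone (⟨F x − F y, x − y⟩ ≥ 0 for all x, y), then the operator Ā is monotone on ℝ^n × ℝ^{Nm} × ℝ^{Nm}_{≥0}: for all ω₁ = (x₁, z₁, λ₁) and ω₂ = (x₂, z₂, λ₂) with λ₁, λ₂ ∈ ℝ^{Nm}_{≥0}, ⟨Ā(ω₁) − Ā(ω₂), ω₁ − ω₂⟩ ≥ 0. -/
/-!
`Ā` splits into three monotone pieces. The `F`-block is monotone by assumption. For each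
component `φ = (g i) j`, the first-order convexity inequality at `x₁` and at `x₂`, weighted by
`λ₁ ≥ 0` and `λ₂ ≥ 0`, makes `(x, λ) ↦ (λ ∇φ(x), -φ(x))` monotone on `E × ℝ≥0`. The Laplacian
terms add up to `⟪𝐋Δz, Δz⟫ + ⟪𝐋Δλ, Δλ⟫ - ⟪𝐋Δz, Δλ⟫`, which is
`½ ∑ W i k (‖a‖² + ‖b‖² - ⟪a, b⟫)` for the edge differences `a`, `b` of `Δz`, `Δλ`.
-/

open scoped RealInnerProductSpace

section Convex

variable {E : Type*} [NormedAddCommGroup E] [InnerProductSpace ℝ E] [CompleteSpace E]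
  {φ : E → ℝ}

theorem ConvexOn.inner_gradient_le_sub (hφ : ConvexOn ℝ Set.univ φ) {x : E}
    (hx : DifferentiableAt ℝ φ x) (y : E) : ⟪gradient φ x, y - x⟫ ≤ φ y - φ x := by
  have hline : HasDerivAt (fun t : ℝ => t • (y - x) + x) (y - x) 0 := by
    simpa using ((hasDerivAt_id (0 : ℝ)).smul_const (y - x)).add_const x
  have hderiv : HasDerivAt (fun t : ℝ => φ (t • (y - x) + x)) ⟪gradient φ x, y - x⟫ 0 :=
    hx.hasGradientAt.hasFDerivAt.comp_hasDerivAt_of_eq (0 : ℝ) hline (by simp)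
  have hconv : ConvexOn ℝ Set.univ (fun t : ℝ => φ (t • (y - x) + x)) := by
    simpa [Function.comp_def, AffineMap.lineMap_apply] using
      hφ.comp_affineMap (AffineMap.lineMap x y)
  simpa [slope_def_field] using
    hconv.le_slope_of_hasDerivAt (Set.mem_univ 0) (Set.mem_univ 1) one_pos hderiv

theorem ConvexOn.mul_sub_le_inner_smul_gradient_sub (hφ : ConvexOn ℝ Set.univ φ)
    {x₁ x₂ : E} (hx₁ : DifferentiableAt ℝ φ x₁) (hx₂ : DifferentiableAt ℝ φ x₂)
    {l₁ l₂ : ℝ} (hl₁ : 0 ≤ l₁) (hl₂ : 0 ≤ l₂) :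
    (φ x₁ - φ x₂) * (l₁ - l₂) ≤ ⟪l₁ • gradient φ x₁ - l₂ • gradient φ x₂, x₁ - x₂⟫ := by
  have h₁ := hφ.inner_gradient_le_sub hx₁ x₂
  have h₂ := hφ.inner_gradient_le_sub hx₂ x₁
  rw [← neg_sub x₁ x₂, inner_neg_right] at h₁
  rw [inner_sub_left, real_inner_smul_left, real_inner_smul_left]
  nlinarith [mul_le_mul_of_nonneg_left h₁ hl₁, mul_le_mul_of_nonneg_left h₂ hl₂]

theorem inner_sub_le_inner_sum_smul_gradient_sub {ι : Type*} [Fintype ι]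
    {g : E → EuclideanSpace ℝ ι} (hg : ∀ j, ConvexOn ℝ Set.univ (fun y => g y j))
    (hgd : Differentiable ℝ g) (x₁ x₂ : E) {l₁ l₂ : EuclideanSpace ℝ ι}
    (hl₁ : ∀ j, 0 ≤ l₁ j) (hl₂ : ∀ j, 0 ≤ l₂ j) :
    ⟪g x₁ - g x₂, l₁ - l₂⟫ ≤
      ⟪∑ j, l₁ j • gradient (fun y => g y j) x₁ - ∑ j, l₂ j • gradient (fun y => g y j) x₂,
        x₁ - x₂⟫ := by
  have hgd' (j : ι) : Differentiable ℝ (fun y => g y j) := by fun_prop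
  rw [← Finset.sum_sub_distrib, sum_inner, PiLp.inner_apply]
  refine Finset.sum_le_sum fun j _ => ?_
  simpa [mul_comm] using
    (hg j).mul_sub_le_inner_smul_gradient_sub (hgd' j x₁) (hgd' j x₂) (hl₁ j) (hl₂ j)

end Convex

section Laplacian

variable {ι E : Type*} [Fintype ι] [NormedAddCommGroup E] [InnerProductSpace ℝ E]
  {W L : Matrix ι ι ℝ}

theorem Matrix.IsSymm.sum_sum_mul_comm (hW : W.IsSymm) (f : ι → ι → ℝ) :
    ∑ i, ∑ k, W i k * f i k = ∑ i, ∑ k, W i k * f k i := by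
  rw [Finset.sum_comm]
  simp_rw [hW.apply]

theorem two_mul_sum_inner_laplacian [DecidableEq ι] (hW : W.IsSymm)
    (hL : ∀ i j, L i j = (if i = j then ∑ k, W i k else 0) - W i j) (u v : ι → E) :
    2 * ∑ i, ⟪∑ k, L i k • u k, v i⟫ = ∑ i, ∑ k, W i k * ⟪u i - u k, v i - v k⟫ := by
  have hlhs : ∑ i, ⟪∑ k, L i k • u k, v i⟫
      = ∑ i, ∑ k, W i k * ⟪u i, v i⟫ - ∑ i, ∑ k, W i k * ⟪u k, v i⟫ := by
    simp only [sum_inner, real_inner_smul_left, hL, sub_mul, ite_mul, zero_mul,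
      Finset.sum_sub_distrib, Finset.sum_ite_eq, Finset.mem_univ, if_true, Finset.sum_mul]
  have hdiag := hW.sum_sum_mul_comm (fun i _ => ⟪u i, v i⟫)
  have hcross := hW.sum_sum_mul_comm (fun i k => ⟪u i, v k⟫)
  simp only [inner_sub_left, inner_sub_right, mul_sub, Finset.sum_sub_distrib]
  rw [hlhs]
  linarith

theorem sum_inner_laplacian_add_sub_nonneg [DecidableEq ι] (hW : W.IsSymm)
    (hWnonneg : ∀ i j, 0 ≤ W i j)
    (hL : ∀ i j, L i j = (if i = j then ∑ k, W i k else 0) - W i j) (u v : ι → E) :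
    0 ≤ ∑ i, ⟪∑ k, L i k • u k, u i⟫ + ∑ i, ⟪∑ k, L i k • v k - ∑ k, L i k • u k, v i⟫ := by
  have hpoint (a b : E) : 0 ≤ ⟪a, a⟫ + ⟪b, b⟫ - ⟪a, b⟫ := by
    have := real_inner_self_nonneg (x := a - b)
    rw [inner_sub_left, inner_sub_right, inner_sub_right, real_inner_comm a b] at this
    nlinarith [real_inner_self_nonneg (x := a), real_inner_self_nonneg (x := b)]
  have hsum : 0 ≤ ∑ i, ∑ k, W i k *
      (⟪u i - u k, u i - u k⟫ + ⟪v i - v k, v i - v k⟫ - ⟪u i - u k, v i - v k⟫) :=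
    Finset.sum_nonneg fun i _ => Finset.sum_nonneg fun k _ =>
      mul_nonneg (hWnonneg i k) (hpoint _ _)
  simp only [mul_sub, mul_add, Finset.sum_sub_distrib, Finset.sum_add_distrib,
    ← two_mul_sum_inner_laplacian hW hL] at hsum
  simp only [inner_sub_left, Finset.sum_sub_distrib]
  linarith

end Laplacian

theorem stmt_3_general {N m : ℕ} (n : Fin N → ℕ)
    (F : PiLp 2 (fun i : Fin N => EuclideanSpace ℝ (Fin (n i))) →
         PiLp 2 (fun i : Fin N => EuclideanSpace ℝ (Fin (n i))))
    (hFmono : ∀ x y : PiLp 2 (fun i : Fin N => EuclideanSpace ℝ (Fin (n i))),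
      0 ≤ ⟪F x - F y, x - y⟫)
    (g : ∀ i : Fin N, EuclideanSpace ℝ (Fin (n i)) → EuclideanSpace ℝ (Fin m))
    (hgsmooth : ∀ i, ContDiff ℝ 1 (g i))
    (hgconv : ∀ i (j : Fin m), ConvexOn ℝ Set.univ (fun y => g i y j))
    (W : Matrix (Fin N) (Fin N) ℝ) (hWsymm : W.IsSymm)
    (hWnonneg : ∀ i j, 0 ≤ W i j)
    (L : Matrix (Fin N) (Fin N) ℝ)
    (hL : ∀ i j, L i j = (if i = j then ∑ k, W i k else 0) - W i j) :
    ∀ (x₁ x₂ : PiLp 2 (fun i : Fin N => EuclideanSpace ℝ (Fin (n i))))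
      (z₁ z₂ l₁ l₂ : PiLp 2 (fun _ : Fin N => EuclideanSpace ℝ (Fin m))),
      (∀ i j, 0 ≤ l₁ i j) → (∀ i j, 0 ≤ l₂ i j) →
      0 ≤ (∑ i, ⟪(F x₁ i + ∑ j, l₁ i j • gradient (fun y => g i y j) (x₁ i))
                  - (F x₂ i + ∑ j, l₂ i j • gradient (fun y => g i y j) (x₂ i)),
                 x₁ i - x₂ i⟫)
          + (∑ i, ⟪(∑ k, L i k • z₁ k) - (∑ k, L i k • z₂ k), z₁ i - z₂ i⟫)
          + (∑ i, ⟪((∑ k, L i k • l₁ k) - g i (x₁ i) - (∑ k, L i k • z₁ k))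
                    - ((∑ k, L i k • l₂ k) - g i (x₂ i) - (∑ k, L i k • z₂ k)),
                   l₁ i - l₂ i⟫) := by
  intro x₁ x₂ z₁ z₂ l₁ l₂ hl₁ hl₂
  have hF : 0 ≤ ∑ i, ⟪F x₁ i - F x₂ i, x₁ i - x₂ i⟫ := by
    simpa only [PiLp.inner_apply, PiLp.sub_apply] using hFmono x₁ x₂
  have hg : ∑ i, ⟪g i (x₁ i) - g i (x₂ i), l₁ i - l₂ i⟫ ≤
      ∑ i, ⟪∑ j, l₁ i j • gradient (fun y => g i y j) (x₁ i)
        - ∑ j, l₂ i j • gradient (fun y => g i y j) (x₂ i), x₁ i - x₂ i⟫ :=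
    Finset.sum_le_sum fun i _ => inner_sub_le_inner_sum_smul_gradient_sub (hgconv i)
      ((hgsmooth i).differentiable one_ne_zero) (x₁ i) (x₂ i) (hl₁ i) (hl₂ i)
  have hlap := sum_inner_laplacian_add_sub_nonneg hWsymm hWnonneg hL
    (fun k => z₁ k - z₂ k) (fun k => l₁ k - l₂ k)
  simp only [smul_sub, Finset.sum_sub_distrib, Finset.sum_add_distrib, inner_sub_left,
    inner_sub_right, inner_add_left] at hF hg hlap ⊢
  linarith

/-- **Monotonicity of the extended operator `Ā`.** In the extended-operator setup, if the
pseudogradient `F` is monotone, then `Ā` is monotone on `ℝ^n × ℝ^{Nm} × ℝ^{Nm}_{≥0}`: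
the sum of the blockwise inner products `⟨Ā(ω₁) − Ā(ω₂), ω₁ − ω₂⟩` is nonnegative. -/
theorem stmt_3 {N m : ℕ} (n : Fin N → ℕ)
    (F : PiLp 2 (fun i : Fin N => EuclideanSpace ℝ (Fin (n i))) →
         PiLp 2 (fun i : Fin N => EuclideanSpace ℝ (Fin (n i))))
    (hFmono : ∀ x y : PiLp 2 (fun i : Fin N => EuclideanSpace ℝ (Fin (n i))),
      0 ≤ ⟪F x - F y, x - y⟫)
    (g : ∀ i : Fin N, EuclideanSpace ℝ (Fin (n i)) → EuclideanSpace ℝ (Fin m))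
    (hgsmooth : ∀ i, ContDiff ℝ 1 (g i))
    (hgconv : ∀ i (j : Fin m), ConvexOn ℝ Set.univ (fun y => g i y j))
    (W : Matrix (Fin N) (Fin N) ℝ) (hWsymm : W.IsSymm)
    (hWnonneg : ∀ i j, 0 ≤ W i j) (hWdiag : ∀ i, W i i = 0)
    (hconn : (SimpleGraph.fromRel (fun i j => W i j ≠ 0)).Connected)
    (L : Matrix (Fin N) (Fin N) ℝ)
    (hL : ∀ i j, L i j = (if i = j then ∑ k, W i k else 0) - W i j) :
    ∀ (x₁ x₂ : PiLp 2 (fun i : Fin N => EuclideanSpace ℝ (Fin (n i))))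
      (z₁ z₂ l₁ l₂ : PiLp 2 (fun _ : Fin N => EuclideanSpace ℝ (Fin m))),
      (∀ i j, 0 ≤ l₁ i j) → (∀ i j, 0 ≤ l₂ i j) →
      0 ≤ (∑ i, ⟪(F x₁ i + ∑ j, l₁ i j • gradient (fun y => g i y j) (x₁ i))
                  - (F x₂ i + ∑ j, l₂ i j • gradient (fun y => g i y j) (x₂ i)),
                 x₁ i - x₂ i⟫)
          + (∑ i, ⟪(∑ k, L i k • z₁ k) - (∑ k, L i k • z₂ k), z₁ i - z₂ i⟫)
          + (∑ i, ⟪((∑ k, L i k • l₁ k) - g i (x₁ i) - (∑ k, L i k • z₁ k))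
                    - ((∑ k, L i k • l₂ k) - g i (x₂ i) - (∑ k, L i k • z₂ k)),
                   l₁ i - l₂ i⟫) :=
  stmt_3_general n F hFmono g hgsmooth hgconv W hWsymm hWnonneg L hL
end

section
/- Let F : ℝ^n → ℝ^n be β-cocoercive (β > 0), let L = D − W be the Laplacian of an undirected weighted graph on N nodes with maximum weighted degree d* = max_i Σ_j w_{ij} > 0, 𝐋 = L ⊗ I_m, and fix b ∈ ℝ^{Nm}. Then the operator C̄(x, z, λ) = (F(x), 0_{Nm}, 𝐋λ + b) on ℝ^n × ℝ^{Nm} × ℝ^{Nm} is θ-cocoercive for every θ with 0 < θ ≤ min{β, 1/(2d*)}. -/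
open scoped RealInnerProductSpace

lemma lap_key {N m : ℕ}
    (W : Matrix (Fin N) (Fin N) ℝ) (hWsymm : W.IsSymm)
    (hWnonneg : ∀ i j, 0 ≤ W i j)
    (dstar : ℝ) (hdub : ∀ i, ∑ j, W i j ≤ dstar)
    (u Lu : PiLp 2 (fun _ : Fin N => EuclideanSpace ℝ (Fin m)))
    (hLu : ∀ i, Lu i = ∑ j, W i j • (u i - u j)) :
    ‖Lu‖ ^ 2 ≤ 2 * dstar * ⟪Lu, u⟫ := by
  have hsum : (2:ℝ) * ⟪Lu, u⟫ = ∑ i, ∑ j, W i j * ‖u i - u j‖ ^ 2 := by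
    have hinner : ⟪Lu, u⟫ = ∑ i, ∑ j, W i j * ⟪u i - u j, u i⟫ := by
      rw [PiLp.inner_apply]
      refine Finset.sum_congr rfl fun i _ => ?_
      rw [hLu, sum_inner]
      exact Finset.sum_congr rfl fun j _ => real_inner_smul_left _ _ _
    have hswap : ∑ i, ∑ j, W i j * ⟪u i - u j, u j⟫
        = -∑ i, ∑ j, W i j * ⟪u i - u j, u i⟫ := by
      rw [Finset.sum_comm, ← Finset.sum_neg_distrib]
      refine Finset.sum_congr rfl fun i _ => ?_
      rw [← Finset.sum_neg_distrib]
      refine Finset.sum_congr rfl fun j _ => ?_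
      rw [hWsymm.apply i j]
      have : (u j - u i) = -(u i - u j) := by abel
      rw [this, inner_neg_left]
      ring
    have : ∑ i, ∑ j, W i j * ‖u i - u j‖ ^ 2
        = ∑ i, ∑ j, W i j * ⟪u i - u j, u i⟫
          - ∑ i, ∑ j, W i j * ⟪u i - u j, u j⟫ := by
      rw [← Finset.sum_sub_distrib]
      refine Finset.sum_congr rfl fun i _ => ?_
      rw [← Finset.sum_sub_distrib]
      refine Finset.sum_congr rfl fun j _ => ?_
      rw [← real_inner_self_eq_norm_sq, inner_sub_right]
      ring
    rw [hinner, this, hswap]; ring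
  have hblock : ∀ i, ‖Lu i‖ ^ 2 ≤ dstar * ∑ j, W i j * ‖u i - u j‖ ^ 2 := by
    intro i
    have h1 : ‖Lu i‖ ≤ ∑ j, W i j * ‖u i - u j‖ := by
      rw [hLu]
      refine (norm_sum_le _ _).trans_eq ?_
      refine Finset.sum_congr rfl fun j _ => ?_
      rw [norm_smul, Real.norm_eq_abs, abs_of_nonneg (hWnonneg i j)]
    have h2 : ‖Lu i‖ ^ 2 ≤ (∑ j, W i j * ‖u i - u j‖) ^ 2 :=
      pow_le_pow_left₀ (norm_nonneg _) h1 2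
    have h3 : (∑ j, W i j * ‖u i - u j‖) ^ 2
        ≤ (∑ j, W i j) * ∑ j, W i j * ‖u i - u j‖ ^ 2 := by
      have := Finset.sum_mul_sq_le_sq_mul_sq Finset.univ
        (fun j => Real.sqrt (W i j)) (fun j => Real.sqrt (W i j) * ‖u i - u j‖)
      calc (∑ j, W i j * ‖u i - u j‖) ^ 2
          = (∑ j, Real.sqrt (W i j) * (Real.sqrt (W i j) * ‖u i - u j‖)) ^ 2 := by
            congr 1
            refine Finset.sum_congr rfl fun j _ => ?_
            rw [← mul_assoc, Real.mul_self_sqrt (hWnonneg i j)]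
        _ ≤ (∑ j, Real.sqrt (W i j) ^ 2) * ∑ j, (Real.sqrt (W i j) * ‖u i - u j‖) ^ 2 := this
        _ = (∑ j, W i j) * ∑ j, W i j * ‖u i - u j‖ ^ 2 := by
            congr 1
            · exact Finset.sum_congr rfl fun j _ => Real.sq_sqrt (hWnonneg i j)
            · refine Finset.sum_congr rfl fun j _ => ?_
              rw [mul_pow, Real.sq_sqrt (hWnonneg i j)]
    have hSnn : 0 ≤ ∑ j, W i j * ‖u i - u j‖ ^ 2 :=
      Finset.sum_nonneg fun j _ => mul_nonneg (hWnonneg i j) (sq_nonneg _)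
    calc ‖Lu i‖ ^ 2 ≤ (∑ j, W i j) * ∑ j, W i j * ‖u i - u j‖ ^ 2 := h2.trans h3
      _ ≤ dstar * ∑ j, W i j * ‖u i - u j‖ ^ 2 :=
          mul_le_mul_of_nonneg_right (hdub i) hSnn
  calc ‖Lu‖ ^ 2 = ∑ i, ‖Lu i‖ ^ 2 := by
        rw [PiLp.norm_sq_eq_of_L2]
    _ ≤ ∑ i, dstar * ∑ j, W i j * ‖u i - u j‖ ^ 2 :=
        Finset.sum_le_sum fun i _ => hblock i
    _ = dstar * ∑ i, ∑ j, W i j * ‖u i - u j‖ ^ 2 := by rw [Finset.mul_sum]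
    _ = 2 * dstar * ⟪Lu, u⟫ := by rw [← hsum]; ring

/-- **Cocoercivity of the extended operator `C̄`.** If `F` is `β`-cocoercive and
`𝐋 = L ⊗ I_m` with `L` the Laplacian of an undirected weighted graph of maximum weighted
degree `d* > 0`, then `C̄(x, z, λ) = (F x, 0, 𝐋λ + b)` is `θ`-cocoercive for every
`0 < θ ≤ min {β, 1/(2 d*)}` (inner products and squared norms on the product space are
the sums of the blockwise ones). -/
theorem stmt_6 {n N m : ℕ}
    (F : EuclideanSpace ℝ (Fin n) → EuclideanSpace ℝ (Fin n))
    (β : ℝ) (hβ : 0 < β)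
    (hcoco : ∀ x y, β * ‖F x - F y‖ ^ 2 ≤ ⟪F x - F y, x - y⟫)
    (W : Matrix (Fin N) (Fin N) ℝ) (hWsymm : W.IsSymm)
    (hWnonneg : ∀ i j, 0 ≤ W i j) (hWdiag : ∀ i, W i i = 0)
    (L : Matrix (Fin N) (Fin N) ℝ)
    (hL : ∀ i j, L i j = (if i = j then ∑ k, W i k else 0) - W i j)
    (dstar : ℝ) (hdpos : 0 < dstar)
    (hdub : ∀ i, ∑ j, W i j ≤ dstar) (hdmem : ∃ i, ∑ j, W i j = dstar)
    (Lop : PiLp 2 (fun _ : Fin N => EuclideanSpace ℝ (Fin m)) →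
           PiLp 2 (fun _ : Fin N => EuclideanSpace ℝ (Fin m)))
    (hLop : ∀ v i, Lop v i = ∑ k, L i k • v k)
    (b : PiLp 2 (fun _ : Fin N => EuclideanSpace ℝ (Fin m)))
    (θ : ℝ) (hθpos : 0 < θ) (hθ : θ ≤ min β (1 / (2 * dstar))) :
    ∀ (x₁ x₂ : EuclideanSpace ℝ (Fin n))
      (z₁ z₂ l₁ l₂ : PiLp 2 (fun _ : Fin N => EuclideanSpace ℝ (Fin m))),
      θ * (‖F x₁ - F x₂‖ ^ 2
            + ‖(0 : PiLp 2 (fun _ : Fin N => EuclideanSpace ℝ (Fin m)))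
                - (0 : PiLp 2 (fun _ : Fin N => EuclideanSpace ℝ (Fin m)))‖ ^ 2
            + ‖(Lop l₁ + b) - (Lop l₂ + b)‖ ^ 2)
        ≤ ⟪F x₁ - F x₂, x₁ - x₂⟫
            + ⟪(0 : PiLp 2 (fun _ : Fin N => EuclideanSpace ℝ (Fin m)))
                - (0 : PiLp 2 (fun _ : Fin N => EuclideanSpace ℝ (Fin m))), z₁ - z₂⟫
            + ⟪(Lop l₁ + b) - (Lop l₂ + b), l₁ - l₂⟫ := by
  intro x₁ x₂ z₁ z₂ l₁ l₂
  have hθβ : θ ≤ β := hθ.trans (min_le_left _ _)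
  have hθd : θ ≤ 1 / (2 * dstar) := hθ.trans (min_le_right _ _)
  -- F part
  have hF : θ * ‖F x₁ - F x₂‖ ^ 2 ≤ ⟪F x₁ - F x₂, x₁ - x₂⟫ :=
    (mul_le_mul_of_nonneg_right hθβ (sq_nonneg _)).trans (hcoco x₁ x₂)
  -- Laplacian part
  have hdiff : (Lop l₁ + b) - (Lop l₂ + b) = Lop l₁ - Lop l₂ := by abel
  set u := l₁ - l₂ with hu
  have hLu : ∀ i, (Lop l₁ - Lop l₂) i = ∑ j, W i j • (u i - u j) := by
    intro i
    have heach : ∀ k, L i k • l₁ k - L i k • l₂ k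
        = (if i = k then ∑ j, W i j else 0) • u k - W i k • u k := by
      intro k
      rw [← smul_sub, hL, sub_smul]
      rfl
    have hlhs : (Lop l₁ - Lop l₂) i = (∑ j, W i j) • u i - ∑ k, W i k • u k := by
      have : (Lop l₁ - Lop l₂) i = Lop l₁ i - Lop l₂ i := rfl
      rw [this, hLop, hLop, ← Finset.sum_sub_distrib]
      simp_rw [heach]
      rw [Finset.sum_sub_distrib]
      congr 1
      simp [ite_smul]
    rw [hlhs]
    rw [show ∑ j, W i j • (u i - u j) = ∑ j, (W i j • u i - W i j • u j) from
      Finset.sum_congr rfl fun j _ => smul_sub _ _ _]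
    rw [Finset.sum_sub_distrib, ← Finset.sum_smul]
  have hk := lap_key W hWsymm hWnonneg dstar hdub u (Lop l₁ - Lop l₂) hLu
  have hinn_nonneg : 0 ≤ ⟪Lop l₁ - Lop l₂, u⟫ := by
    nlinarith [sq_nonneg ‖Lop l₁ - Lop l₂‖]
  have hLpart : θ * ‖Lop l₁ - Lop l₂‖ ^ 2 ≤ ⟪Lop l₁ - Lop l₂, u⟫ := by
    have h1 : θ * (2 * dstar) ≤ 1 := by
      rw [le_div_iff₀ (by positivity)] at hθd
      linarith [hθd]
    nlinarith [mul_le_mul_of_nonneg_left hk hθpos.le]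
  -- zero part
  have hz1 : ‖(0 : PiLp 2 (fun _ : Fin N => EuclideanSpace ℝ (Fin m)))
      - (0 : PiLp 2 (fun _ : Fin N => EuclideanSpace ℝ (Fin m)))‖ ^ 2 = 0 := by
    simp
  have hz2 : ⟪(0 : PiLp 2 (fun _ : Fin N => EuclideanSpace ℝ (Fin m)))
      - (0 : PiLp 2 (fun _ : Fin N => EuclideanSpace ℝ (Fin m))), z₁ - z₂⟫ = 0 := by
    simp
  rw [hdiff, hz1, hz2]
  linarith [hF, hLpart]
end

section
/- (Robbins–Siegmund) Let (Ω, 𝔉, ℙ) be a probability space with filtration (𝔉_k)_{k∈ℕ}. Let (α_k), (θ_k), (η_k), (χ_k) be sequences of nonnegative random variables, each α_k, θ_k, η_k, χ_k being 𝔉_k-measurable, such that Σ_k η_k < ∞ a.s., Σ_k χ_k < ∞ a.s., and for every k ∈ ℕ, E[α_{k+1} | 𝔉_k] + θ_k ≤ (1 + χ_k) α_k + η_k almost surely. Then Σ_k θ_k < ∞ almost surely, and (α_k) converges almost surely to a nonnegative random variable. -/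
/-!
Dividing `α_k` by `∏_{j<k} (1 + χ_j)` absorbs the factor `1 + χ_k`, turning the recursion into
`E[α'_{k+1} | 𝔉_k] + θ'_k ≤ α'_k + η'_k`. Then `α'_n + ∑_{j<n} (θ'_j - η'_j)` is a supermartingale,
and it is bounded below as soon as `∑ η'_j` is bounded; this is arranged by cutting the
weights off on the predictable event `∑_{j<k} η_j > M`. A supermartingale bounded below converges
a.s., which gives the claim for the normalised sequences on `{∑ η_j ≤ M}`; the normalisation is
undone using that `∏ (1 + χ_j)` converges when `∑ χ_j < ∞`, and `M` ranges over `ℕ`.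
-/

open MeasureTheory Filter Finset Topology

theorem summable_and_exists_tendsto_of_tendsto_add_sum_sub {a t e : ℕ → ℝ} {M c : ℝ}
    (ha : ∀ k, 0 ≤ a k) (ht : ∀ k, 0 ≤ t k) (he : ∀ k, 0 ≤ e k)
    (he_le : ∀ n, ∑ j ∈ range n, e j ≤ M)
    (h : Tendsto (fun n => a n + ∑ j ∈ range n, (t j - e j)) atTop (𝓝 c)) :
    Summable t ∧ ∃ l, Tendsto a atTop (𝓝 l) := by
  obtain ⟨C, hC⟩ := h.bddAbove_range
  have he_sum : Summable e := summable_of_sum_range_le he he_le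
  have ht_sum : Summable t := by
    refine summable_of_sum_range_le ht (c := C + M) fun n => ?_
    have : a n + ∑ j ∈ range n, (t j - e j) ≤ C := hC ⟨n, rfl⟩
    rw [sum_sub_distrib] at this
    linarith [ha n, he_le n]
  refine ⟨ht_sum, c - ∑' k, t k + ∑' k, e k, ?_⟩
  refine ((h.sub ht_sum.hasSum.tendsto_sum_nat).add he_sum.hasSum.tendsto_sum_nat).congr
    fun n => ?_
  rw [sum_sub_distrib]
  ring

theorem summable_and_tendsto_of_discounted {a t x : ℕ → ℝ} {c : ℝ}
    (hx : ∀ k, 0 ≤ x k) (hx_sum : Summable x) (ht : ∀ k, 0 ≤ t k)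
    (ht_sum : Summable fun k => (∏ j ∈ range (k + 1), (1 + x j))⁻¹ * t k)
    (ha : Tendsto (fun k => (∏ j ∈ range k, (1 + x j))⁻¹ * a k) atTop (𝓝 c)) :
    Summable t ∧ Tendsto a atTop (𝓝 ((∏' j, (1 + x j)) * c)) := by
  set p : ℕ → ℝ := fun k => ∏ j ∈ range k, (1 + x j)
  have hp_pos (k : ℕ) : 0 < p k := prod_pos fun j _ => by linarith [hx j]
  have hp_mono : Monotone p :=
    (prod_mono_set_of_one_le fun j => le_add_of_nonneg_right (hx j)).comp range_mono
  have hp : Tendsto p atTop (𝓝 (∏' j, (1 + x j))) :=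
    (Real.multipliable_one_add_of_summable hx_sum).hasProd.tendsto_prod_nat
  refine ⟨(ht_sum.mul_left (∏' j, (1 + x j))).of_nonneg_of_le ht fun k => ?_,
    (hp.mul ha).congr fun k => ?_⟩
  · calc t k = p (k + 1) * ((p (k + 1))⁻¹ * t k) := by
          rw [← mul_assoc, mul_inv_cancel₀ (hp_pos _).ne', one_mul]
      _ ≤ _ := mul_le_mul_of_nonneg_right (hp_mono.ge_of_tendsto hp (k + 1))
          (mul_nonneg (inv_nonneg.2 (hp_pos _).le) (ht k))
  · rw [← mul_assoc, mul_inv_cancel₀ (hp_pos k).ne', one_mul]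

section TruncatedDiscount

variable {Ω : Type*}

noncomputable def truncatedDiscount (η χ : ℕ → Ω → ℝ) (M : ℝ) (k : ℕ) : Ω → ℝ :=
  {ω | ∑ j ∈ range k, η j ω ≤ M}.indicator fun ω => (∏ j ∈ range k, (1 + χ j ω))⁻¹

variable {η χ : ℕ → Ω → ℝ} {M : ℝ}

theorem truncatedDiscount_of_sum_le {k : ℕ} {ω : Ω} (h : ∑ j ∈ range k, η j ω ≤ M) :
    truncatedDiscount η χ M k ω = (∏ j ∈ range k, (1 + χ j ω))⁻¹ :=
  Set.indicator_of_mem (s := {x | ∑ j ∈ range k, η j x ≤ M}) h _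

theorem truncatedDiscount_of_not_sum_le {k : ℕ} {ω : Ω} (h : ¬∑ j ∈ range k, η j ω ≤ M) :
    truncatedDiscount η χ M k ω = 0 :=
  Set.indicator_of_notMem (s := {x | ∑ j ∈ range k, η j x ≤ M}) h _

theorem one_le_prod_one_add (hχ : ∀ k ω, 0 ≤ χ k ω) (k : ℕ) (ω : Ω) :
    1 ≤ ∏ j ∈ range k, (1 + χ j ω) :=
  Finset.one_le_prod fun j _ => le_add_of_nonneg_right (hχ j ω)

theorem truncatedDiscount_nonneg (hχ : ∀ k ω, 0 ≤ χ k ω) (k : ℕ) (ω : Ω) :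
    0 ≤ truncatedDiscount η χ M k ω :=
  Set.indicator_nonneg
    (fun ω _ => inv_nonneg.2 (zero_le_one.trans (one_le_prod_one_add hχ k ω))) ω

theorem truncatedDiscount_le_one (hχ : ∀ k ω, 0 ≤ χ k ω) (k : ℕ) (ω : Ω) :
    truncatedDiscount η χ M k ω ≤ 1 :=
  Set.indicator_apply_le' (fun _ => inv_le_one_of_one_le₀ (one_le_prod_one_add hχ k ω))
    fun _ => zero_le_one

theorem truncatedDiscount_succ_mul_le (hχ : ∀ k ω, 0 ≤ χ k ω) (hη : ∀ k ω, 0 ≤ η k ω)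
    (k : ℕ) (ω : Ω) :
    truncatedDiscount η χ M (k + 1) ω * (1 + χ k ω) ≤ truncatedDiscount η χ M k ω := by
  by_cases hω : ∑ j ∈ range (k + 1), η j ω ≤ M
  · have hωk : ∑ j ∈ range k, η j ω ≤ M := by
      rw [sum_range_succ] at hω
      linarith [hη k ω]
    have hχk : 1 + χ k ω ≠ 0 := by linarith [hχ k ω]
    rw [truncatedDiscount_of_sum_le hω, truncatedDiscount_of_sum_le hωk, prod_range_succ,
      mul_inv, mul_assoc, inv_mul_cancel₀ hχk, mul_one]
  · rw [truncatedDiscount_of_not_sum_le hω, zero_mul]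
    exact truncatedDiscount_nonneg hχ k ω

theorem sum_truncatedDiscount_succ_mul_le (hχ : ∀ k ω, 0 ≤ χ k ω) (hη : ∀ k ω, 0 ≤ η k ω)
    (hM : 0 ≤ M) (n : ℕ) (ω : Ω) :
    ∑ j ∈ range n, truncatedDiscount η χ M (j + 1) ω * η j ω ≤ M := by
  induction n with
  | zero => simpa using hM
  | succ n ih =>
    by_cases hω : ∑ j ∈ range (n + 1), η j ω ≤ M
    · refine le_trans (sum_le_sum fun j _ => ?_) hω
      exact mul_le_of_le_one_left (hη j ω) (truncatedDiscount_le_one hχ _ ω)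
    · rw [sum_range_succ, truncatedDiscount_of_not_sum_le hω, zero_mul, add_zero]
      exact ih

end TruncatedDiscount

namespace MeasureTheory

variable {Ω : Type*} {m0 : MeasurableSpace Ω} {μ : Measure Ω} {ℱ : Filtration ℕ m0}

@[to_additive]
theorem Adapted.measurable_prod_range {M : Type*} [CommMonoid M] [MeasurableSpace M]
    [MeasurableMul₂ M] {f : ℕ → Ω → M} (hf : Adapted ℱ f) {n k : ℕ}
    (hnk : n ≤ k + 1) : Measurable[ℱ k] fun ω => ∏ j ∈ range n, f j ω :=
  Finset.measurable_fun_prod _ fun j hj =>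
    (hf j).mono (ℱ.mono (by have := mem_range.1 hj; omega)) le_rfl

theorem Supermartingale.exists_ae_tendsto_of_nonneg [IsFiniteMeasure μ] {f : ℕ → Ω → ℝ}
    (hf : Supermartingale f ℱ μ) (hnonneg : ∀ n, 0 ≤ᵐ[μ] f n) :
    ∀ᵐ ω ∂μ, ∃ c, Tendsto (fun n => f n ω) atTop (𝓝 c) := by
  have hbdd : ∀ n, eLpNorm (-f n) 1 μ ≤ ENNReal.ofReal (∫ ω, f 0 ω ∂μ) := fun n => by
    rw [eLpNorm_neg, eLpNorm_one_eq_lintegral_enorm,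
      ← ofReal_integral_norm_eq_lintegral_enorm (hf.integrable n)]
    refine ENNReal.ofReal_le_ofReal ?_
    calc ∫ ω, ‖f n ω‖ ∂μ = ∫ ω, f n ω ∂μ :=
          integral_congr_ae <| (hnonneg n).mono fun ω hω => Real.norm_of_nonneg hω
      _ ≤ ∫ ω, f 0 ω ∂μ := by
          simpa using hf.setIntegral_le (Nat.zero_le n) MeasurableSet.univ
  filter_upwards [hf.neg.exists_ae_tendsto_of_bdd hbdd] with ω ⟨c, hc⟩
  exact ⟨-c, by simpa using hc.neg⟩

theorem ae_summable_and_exists_tendsto_of_condExp_add_le [IsFiniteMeasure μ]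
    {α θ η : ℕ → Ω → ℝ} {M : ℝ}
    (hα : ∀ k ω, 0 ≤ α k ω) (hθ : ∀ k ω, 0 ≤ θ k ω) (hη : ∀ k ω, 0 ≤ η k ω)
    (hα_adapted : Adapted ℱ α) (hθ_adapted : Adapted ℱ θ) (hη_adapted : Adapted ℱ η)
    (hα_int : ∀ k, Integrable (α k) μ) (hη_le : ∀ n ω, ∑ j ∈ range n, η j ω ≤ M)
    (hrec : ∀ k, ∀ᵐ ω ∂μ, μ[α (k + 1) | ℱ k] ω + θ k ω ≤ α k ω + η k ω) :
    ∀ᵐ ω ∂μ, Summable (fun k => θ k ω) ∧ ∃ c, Tendsto (fun k => α k ω) atTop (𝓝 c) := by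
  have hη_int (k : ℕ) : Integrable (η k) μ := by
    refine Integrable.of_bound ((hη_adapted k).mono (ℱ.le k) le_rfl).aestronglyMeasurable M
      (ae_of_all _ fun ω => ?_)
    rw [Real.norm_of_nonneg (hη k ω)]
    exact (single_le_sum (fun j _ => hη j ω) (self_mem_range_succ k)).trans (hη_le (k + 1) ω)
  have hθ_int (k : ℕ) : Integrable (θ k) μ := by
    refine ((hα_int k).add (hη_int k)).mono'
      ((hθ_adapted k).mono (ℱ.le k) le_rfl).aestronglyMeasurable ?_
    filter_upwards [hrec k, condExp_nonneg (ae_of_all μ (hα (k + 1))) (m := ℱ k)]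
      with ω hω hE
    rw [Real.norm_of_nonneg (hθ k ω), Pi.add_apply]
    exact le_of_add_le_of_nonneg_right hω hE
  set X : ℕ → Ω → ℝ := fun n ω => α n ω + (∑ j ∈ range n, (θ j ω - η j ω) + M) with hX_def
  have hS_meas {n k : ℕ} (hnk : n ≤ k + 1) :
      StronglyMeasurable[ℱ k] fun ω => ∑ j ∈ range n, (θ j ω - η j ω) + M :=
    (((hθ_adapted.sub hη_adapted).measurable_sum_range hnk).add_const M).stronglyMeasurable
  have hS_int (n : ℕ) : Integrable (fun ω => ∑ j ∈ range n, (θ j ω - η j ω) + M) μ :=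
    (integrable_finsetSum _ fun j _ => (hθ_int j).sub (hη_int j)).add (integrable_const M)
  have hX : Supermartingale X ℱ μ := by
    refine supermartingale_nat
      (fun n => (hα_adapted n).stronglyMeasurable.add (hS_meas n.le_succ))
      (fun n => (hα_int n).add (hS_int n)) fun k => ?_
    filter_upwards [condExp_add (hα_int (k + 1)) (hS_int (k + 1)) (ℱ k), hrec k]
      with ω hadd hω
    refine hadd.trans_le ?_
    rw [Pi.add_apply, condExp_of_stronglyMeasurable (ℱ.le k) (hS_meas le_rfl) (hS_int _)]
    simp only [hX_def, sum_range_succ]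
    linarith
  have hX_nonneg (n : ℕ) : 0 ≤ᵐ[μ] X n := ae_of_all _ fun ω => by
    have := sum_nonneg fun j (_ : j ∈ range n) => hθ j ω
    simp only [hX_def, Pi.zero_apply, sum_sub_distrib]
    linarith [hα n ω, hη_le n ω]
  filter_upwards [hX.exists_ae_tendsto_of_nonneg hX_nonneg] with ω ⟨c, hc⟩
  exact summable_and_exists_tendsto_of_tendsto_add_sum_sub (hα · ω) (hθ · ω) (hη · ω)
    (hη_le · ω) ((hc.sub_const M).congr fun n => by simp only [hX_def]; ring)

theorem Adapted.measurable_truncatedDiscount {η χ : ℕ → Ω → ℝ} (hη : Adapted ℱ η)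
    (hχ : Adapted ℱ χ) (M : ℝ) {n k : ℕ} (hnk : n ≤ k + 1) :
    Measurable[ℱ k] (truncatedDiscount η χ M n) :=
  ((Adapted.measurable_prod_range (fun j => (hχ j).const_add 1) hnk).inv).indicator
    (measurableSet_le (hη.measurable_sum_range hnk) measurable_const)

theorem ae_summable_and_exists_tendsto_truncatedDiscount_mul [IsFiniteMeasure μ]
    {α θ η χ : ℕ → Ω → ℝ} {M : ℝ} (hM : 0 ≤ M)
    (hα : ∀ k ω, 0 ≤ α k ω) (hθ : ∀ k ω, 0 ≤ θ k ω) (hη : ∀ k ω, 0 ≤ η k ω)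
    (hχ : ∀ k ω, 0 ≤ χ k ω) (hα_adapted : Adapted ℱ α) (hθ_adapted : Adapted ℱ θ)
    (hη_adapted : Adapted ℱ η) (hχ_adapted : Adapted ℱ χ) (hα_int : ∀ k, Integrable (α k) μ)
    (hrec : ∀ k, ∀ᵐ ω ∂μ, μ[α (k + 1) | ℱ k] ω + θ k ω ≤ (1 + χ k ω) * α k ω + η k ω) :
    ∀ᵐ ω ∂μ, Summable (fun k => truncatedDiscount η χ M (k + 1) ω * θ k ω) ∧
      ∃ c, Tendsto (fun k => truncatedDiscount η χ M k ω * α k ω) atTop (𝓝 c) := by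
  set w := truncatedDiscount η χ M
  have hw_nonneg (k : ℕ) (ω : Ω) : 0 ≤ w k ω := truncatedDiscount_nonneg hχ k ω
  have hw_meas {n k : ℕ} (hnk : n ≤ k + 1) : Measurable[ℱ k] (w n) :=
    hη_adapted.measurable_truncatedDiscount hχ_adapted M hnk
  have hwα_int (k : ℕ) : Integrable (w k * α k) μ :=
    (hα_int k).bdd_mul ((hw_meas k.le_succ).mono (ℱ.le k) le_rfl).aestronglyMeasurable
      (c := 1) (ae_of_all _ fun ω => by
        rw [Real.norm_of_nonneg (truncatedDiscount_nonneg hχ k ω)]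
        exact truncatedDiscount_le_one hχ k ω)
  refine ae_summable_and_exists_tendsto_of_condExp_add_le (α := fun k => w k * α k)
    (η := fun k ω => w (k + 1) ω * η k ω)
    (fun k ω => mul_nonneg (hw_nonneg k ω) (hα k ω))
    (fun k ω => mul_nonneg (hw_nonneg _ ω) (hθ k ω))
    (fun k ω => mul_nonneg (hw_nonneg _ ω) (hη k ω))
    (fun k => (hw_meas k.le_succ).mul (hα_adapted k))
    (fun k => (hw_meas le_rfl).mul (hθ_adapted k))
    (fun k => (hw_meas le_rfl).mul (hη_adapted k))
    hwα_int (sum_truncatedDiscount_succ_mul_le hχ hη hM) fun k => ?_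
  filter_upwards [condExp_mul_of_stronglyMeasurable_left (hw_meas le_rfl).stronglyMeasurable
    (hwα_int (k + 1)) (hα_int (k + 1)), hrec k] with ω hpull hω
  have h₁ := mul_le_mul_of_nonneg_left hω (hw_nonneg (k + 1) ω)
  have h₂ : w (k + 1) ω * (1 + χ k ω) * α k ω ≤ w k ω * α k ω :=
    mul_le_mul_of_nonneg_right (truncatedDiscount_succ_mul_le hχ hη k ω) (hα k ω)
  simp only [hpull, Pi.mul_apply]
  linarith

end MeasureTheory

/-- **Robbins–Siegmund lemma.** If nonnegative adapted (integrable) sequences satisfy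
`E[α_{k+1} | 𝔉_k] + θ_k ≤ (1 + χ_k) α_k + η_k` a.s. with `Σ η_k < ∞` and `Σ χ_k < ∞` a.s.,
then `Σ θ_k < ∞` a.s. and `(α_k)` converges a.s. to a nonnegative (random) limit. -/
theorem stmt_10 {Ωs : Type} {m0 : MeasurableSpace Ωs}
    (P : Measure Ωs) [IsProbabilityMeasure P] (ℱ : Filtration ℕ m0)
    (α θ η χ : ℕ → Ωs → ℝ)
    (hα_nonneg : ∀ k ω, 0 ≤ α k ω) (hθ_nonneg : ∀ k ω, 0 ≤ θ k ω)
    (hη_nonneg : ∀ k ω, 0 ≤ η k ω) (hχ_nonneg : ∀ k ω, 0 ≤ χ k ω)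
    (hα_adapted : Adapted ℱ α) (hθ_adapted : Adapted ℱ θ)
    (hη_adapted : Adapted ℱ η) (hχ_adapted : Adapted ℱ χ)
    (hα_int : ∀ k, Integrable (α k) P)
    (hη_sum : ∀ᵐ ω ∂P, Summable fun k => η k ω)
    (hχ_sum : ∀ᵐ ω ∂P, Summable fun k => χ k ω)
    (hrec : ∀ k, ∀ᵐ ω ∂P,
      (P[α (k + 1) | ℱ k]) ω + θ k ω ≤ (1 + χ k ω) * α k ω + η k ω) :
    ∀ᵐ ω ∂P, (Summable fun k => θ k ω) ∧
      ∃ l : ℝ, 0 ≤ l ∧ Tendsto (fun k => α k ω) atTop (nhds l) := by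
  have h_trunc (M : ℕ) :=
    ae_summable_and_exists_tendsto_truncatedDiscount_mul (μ := P) (M := (M : ℝ)) M.cast_nonneg
      hα_nonneg hθ_nonneg hη_nonneg hχ_nonneg hα_adapted hθ_adapted hη_adapted hχ_adapted
      hα_int hrec
  filter_upwards [hη_sum, hχ_sum, ae_all_iff.2 h_trunc] with ω hηω hχω htrunc
  obtain ⟨M, hM⟩ := exists_nat_ge (∑' k, η k ω)
  have hη_le (n : ℕ) : ∑ j ∈ range n, η j ω ≤ M :=
    (hηω.sum_le_tsum _ fun j _ => hη_nonneg j ω).trans hM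
  obtain ⟨hθ_sum, c, hc⟩ := htrunc M
  simp only [truncatedDiscount_of_sum_le (hη_le _)] at hθ_sum hc
  obtain ⟨hθ, hα⟩ := summable_and_tendsto_of_discounted (hχ_nonneg · ω) hχω (hθ_nonneg · ω)
    hθ_sum hc
  exact ⟨hθ, _, ge_of_tendsto' hα fun k => hα_nonneg k ω, hα⟩
end

section
/- (Cocoercive maps satisfy the cut property) Let C ⊆ ℝ^n be nonempty, closed and convex, and let F : ℝ^n → ℝ^n be β-cocoercive for some β > 0. Suppose x* ∈ C satisfies ⟨F(x*), x − x*⟩ ≥ 0 for all x ∈ C, and x̄ ∈ C satisfies ⟨F(x̄), x̄ − x*⟩ = 0. Then F(x̄) = F(x*) and ⟨F(x̄), x − x̄⟩ ≥ 0 for all x ∈ C, i.e., x̄ is also a solution of the variational inequality VI(C, F). -/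
open scoped RealInnerProductSpace

/-- **Cocoercive maps satisfy the cut property.** If `F` is `β`-cocoercive, `x*` solves
`VI(C, F)` and `x̄ ∈ C` satisfies `⟨F x̄, x̄ − x*⟩ = 0`, then `F x̄ = F x*` and `x̄` also
solves `VI(C, F)`. -/
theorem stmt_18 {n : ℕ} (C : Set (EuclideanSpace ℝ (Fin n)))
    (hCne : C.Nonempty) (hCclosed : IsClosed C) (hCconv : Convex ℝ C)
    (F : EuclideanSpace ℝ (Fin n) → EuclideanSpace ℝ (Fin n))
    (β : ℝ) (hβ : 0 < β)
    (hcoco : ∀ x y, β * ‖F x - F y‖ ^ 2 ≤ ⟪F x - F y, x - y⟫)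
    (xstar : EuclideanSpace ℝ (Fin n)) (hxstar : xstar ∈ C)
    (hsol : ∀ x ∈ C, 0 ≤ ⟪F xstar, x - xstar⟫)
    (xbar : EuclideanSpace ℝ (Fin n)) (hxbar : xbar ∈ C)
    (hcut : ⟪F xbar, xbar - xstar⟫ = 0) :
    F xbar = F xstar ∧ ∀ x ∈ C, 0 ≤ ⟪F xbar, x - xbar⟫ := by
  have h1 := hcoco xbar xstar
  have h2 := hsol xbar hxbar
  have hexp : ⟪F xbar - F xstar, xbar - xstar⟫
      = ⟪F xbar, xbar - xstar⟫ - ⟪F xstar, xbar - xstar⟫ := by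
    rw [inner_sub_left]
  have hle : β * ‖F xbar - F xstar‖ ^ 2 ≤ 0 := by
    rw [hexp, hcut] at h1; linarith
  have hsq : ‖F xbar - F xstar‖ ^ 2 ≤ 0 := by
    by_contra h; push_neg at h; nlinarith [mul_pos hβ h]
  have hnorm : ‖F xbar - F xstar‖ = 0 := by
    nlinarith [sq_nonneg ‖F xbar - F xstar‖, norm_nonneg (F xbar - F xstar)]
  have heq : F xbar = F xstar := by
    rwa [norm_eq_zero, sub_eq_zero] at hnorm
  refine ⟨heq, fun x hx => ?_⟩
  have h3 := hsol x hx
  have : ⟪F xbar, x - xbar⟫ = ⟪F xstar, x - xstar⟫ - ⟪F xbar, xbar - xstar⟫ := by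
    rw [heq]
    rw [← inner_sub_right]
    congr 1
    abel
  rw [this, hcut]; linarith
end
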